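/- arXiv:2407.19366 — 3 statements merged into one kernel-verified Lean document; each statement's English description precedes it below -/
import Mathlib

section
/- Let d ≥ 2, a < 0, a_c = (d-2)/2, and let b_FS(a) = d(a_c - a)/(2√((a_c-a)² + (d-1))) + a - a_c. If b = b_FS(a) and p = (d + 2(1+a-b))/(d - 2(1+a-b)), then (a_c - a)² = 4(d-1)/((p+1)² - 4). -/
/-!
Write `t = a_c - a` and `s = √(t² + d - 1)`. On the Felli–Schneider curve
`1 + a - b = d/2 - d t / (2 s)`, so the two halves of the fraction defining `p` are
`2d - d t / s` and `d t / s`, whence `p + 1 = 2 s / t`. Then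
`(p + 1)² - 4 = 4 (s² - t²) / t² = 4 (d - 1) / t²`.
-/

theorem sq_eq_div_of_eq_two_mul_sqrt_div {t c q : ℝ} (ht : t ≠ 0) (hc : 0 < c)
    (hq : q = 2 * √(t ^ 2 + c) / t) : t ^ 2 = 4 * c / (q ^ 2 - 4) := by
  have hs : √(t ^ 2 + c) ^ 2 = t ^ 2 + c := Real.sq_sqrt (by positivity)
  have hq2 : q ^ 2 - 4 = 4 * c / t ^ 2 := by
    rw [hq, div_pow, mul_pow, hs]
    field_simp
    ring
  rw [hq2]
  field_simp

theorem felliSchneider_exponent_add_one {d a b p s t : ℝ} (hd : d ≠ 0) (ht : t ≠ 0) (hs : s ≠ 0)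
    (hb : b = d * t / (2 * s) + a - (d - 2) / 2)
    (hp : p = (d + 2 * (1 + a - b)) / (d - 2 * (1 + a - b))) :
    p + 1 = 2 * s / t := by
  have hab : 1 + a - b = d / 2 - d * t / (2 * s) := by
    rw [hb]
    linarith
  have hden : d - 2 * (1 + a - b) = d * t / s := by
    rw [hab]
    field_simp
    ring
  have hden0 : d * t / s ≠ 0 := by positivity
  rw [hp, hden, hab]
  field_simp
  ring

/-- On the Felli–Schneider curve `b = b_FS(a)` one has the algebraic identity
`(a_c - a)² = 4(d-1)/((p+1)² - 4)`. -/
theorem stmt2 (d : ℕ) (hd : 2 ≤ d) (a b p : ℝ) (ha : a < 0)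
    (hb : b = (d : ℝ) * (((d : ℝ) - 2) / 2 - a) /
        (2 * Real.sqrt ((((d : ℝ) - 2) / 2 - a) ^ 2 + ((d : ℝ) - 1))) + a - ((d : ℝ) - 2) / 2)
    (hp : p = ((d : ℝ) + 2 * (1 + a - b)) / ((d : ℝ) - 2 * (1 + a - b))) :
    (((d : ℝ) - 2) / 2 - a) ^ 2 = 4 * ((d : ℝ) - 1) / ((p + 1) ^ 2 - 4) := by
  have hd2 : (2 : ℝ) ≤ d := by exact_mod_cast hd
  have ht : ((d : ℝ) - 2) / 2 - a ≠ 0 := by linarith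
  have hs : √((((d : ℝ) - 2) / 2 - a) ^ 2 + ((d : ℝ) - 1)) ≠ 0 :=
    (Real.sqrt_pos.mpr (add_pos_of_nonneg_of_pos (sq_nonneg _) (by linarith))).ne'
  exact sq_eq_div_of_eq_two_mul_sqrt_div ht (by linarith)
    (felliSchneider_exponent_add_one (by linarith : (0 : ℝ) < d).ne' ht hs hb hp)
end

section
/- Let d ≥ 2, a < 0, and suppose Λ := (a_c-a)² = 4(d-1)/((p+1)²-4) with p > 1 (the Felli–Schneider degenerate case). Let Ψ(t) = ((p+1)Λ/2)^{1/(p-1)} (cosh(√Λ(p-1)t/2))^{-2/(p-1)} and let θ_l be a standard degree-one spherical harmonic on S^{d-1} (i.e. a coordinate function restricted to the sphere, satisfying -Δ_θ θ_l = (d-1) θ_l). Then w(t,θ) = Ψ(t)^{(p+1)/2} θ_l satisfies -Δ_θ w - ∂_t² w + Λ w = p Ψ^{p-1} w on the cylinder ℝ × S^{d-1}. -/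
/-!
Up to a constant, `φ = Ψ^{(p+1)/2}` is `cosh (b t) ^ E` with `b = √Λ (p-1)/2` and
`E = -(p+1)/(p-1)`, while `Ψ^{p-1}` is a multiple of `cosh (b t) ^ (-2)`. Differentiating twice
and using `cosh² - sinh² = 1` gives `φ'' = (Λ (p+1)²/4 - p Ψ^{p-1}) φ`. The Felli–Schneider
relation says precisely that the angular eigenvalue `d - 1` equals `Λ (p+1)²/4 - Λ`, so in
`-Δ_θ w - ∂_t² w + Λ w` the constant terms cancel and only `p Ψ^{p-1} w` survives.
-/

/-- The Laplace–Beltrami operator on the unit sphere of `ℝ^d`, computed via the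
degree-zero homogeneous extension: `Δ_θ f (θ) = Δ_{ℝ^d} (x ↦ f(x/‖x‖)) (θ)`. -/
noncomputable def sphereLaplacian {d : ℕ} (f : EuclideanSpace ℝ (Fin d) → ℝ)
    (θ : EuclideanSpace ℝ (Fin d)) : ℝ :=
  ∑ i : Fin d, iteratedFDeriv ℝ 2 (fun x => f (‖x‖⁻¹ • x)) θ
    ![EuclideanSpace.single i 1, EuclideanSpace.single i 1]

open Real

theorem sphereLaplacian_const_mul {d : ℕ} (c : ℝ) (f : EuclideanSpace ℝ (Fin d) → ℝ)
    {θ : EuclideanSpace ℝ (Fin d)} (hf : ContDiffAt ℝ 2 (fun x => f (‖x‖⁻¹ • x)) θ) :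
    sphereLaplacian (fun x => c * f x) θ = c * sphereLaplacian f θ := by
  simp only [sphereLaplacian, ← smul_eq_mul (a := c), iteratedFDeriv_const_smul_apply' hf,
    smul_apply, Finset.smul_sum]

theorem contDiffAt_inv_norm_smul {E : Type*} [NormedAddCommGroup E] [InnerProductSpace ℝ E]
    {n : WithTop ℕ∞} {x : E} (hx : x ≠ 0) : ContDiffAt ℝ n (fun x : E => ‖x‖⁻¹ • x) x :=
  ((contDiffAt_norm ℝ hx).inv (norm_ne_zero_iff.2 hx)).smul contDiffAt_id

theorem contDiffAt_inv_norm_smul_apply {d : ℕ} {n : WithTop ℕ∞} (l : Fin d)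
    {x : EuclideanSpace ℝ (Fin d)} (hx : x ≠ 0) :
    ContDiffAt ℝ n (fun x : EuclideanSpace ℝ (Fin d) => (‖x‖⁻¹ • x) l) x :=
  ((contDiff_euclidean.mp contDiff_id l).contDiffAt).comp x (contDiffAt_inv_norm_smul hx)

theorem hasDerivAt_cosh_mul_rpow (b E s : ℝ) :
    HasDerivAt (fun s => cosh (b * s) ^ E) (b * E * (cosh (b * s) ^ (E - 1) * sinh (b * s))) s := by
  have hb : HasDerivAt (fun s => b * s) b s := by simpa using (hasDerivAt_id s).const_mul b
  convert hb.cosh.rpow_const (p := E) (Or.inl (cosh_pos _).ne') using 1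
  ring

theorem deriv_deriv_cosh_mul_rpow (b E t : ℝ) :
    deriv (deriv fun s => cosh (b * s) ^ E) t =
      b ^ 2 * E * (E * cosh (b * t) ^ E - (E - 1) * cosh (b * t) ^ (E - 2)) := by
  have hcosh := cosh_pos (b * t)
  have hb : HasDerivAt (fun s => b * s) b t := by simpa using (hasDerivAt_id t).const_mul b
  have h := ((hb.cosh.rpow_const (p := E - 1) (Or.inl hcosh.ne')).fun_mul hb.sinh).const_mul (b * E)
  rw [funext fun s => (hasDerivAt_cosh_mul_rpow b E s).deriv, h.deriv]
  have h1 : cosh (b * t) ^ (E - 1) = cosh (b * t) ^ (E - 2) * cosh (b * t) := by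
    rw [← rpow_add_one hcosh.ne', show E - 2 + 1 = E - 1 by ring]
  have h2 : cosh (b * t) ^ E = cosh (b * t) ^ (E - 2) * cosh (b * t) ^ 2 := by
    rw [← rpow_natCast, ← rpow_add hcosh]; norm_num
  rw [show E - 1 - 1 = E - 2 by ring, h1, h2]
  linear_combination (-b ^ 2 * E * (E - 1) * cosh (b * t) ^ (E - 2)) * cosh_sq_sub_sinh_sq (b * t)

noncomputable def groundState (Λ p t : ℝ) : ℝ :=
  ((p + 1) * Λ / 2) ^ (1 / (p - 1)) * cosh (√Λ * (p - 1) * t / 2) ^ (-(2 / (p - 1)))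

theorem groundState_rpow {Λ p : ℝ} (hΛ : 0 ≤ Λ) (hp : 1 < p) (t r : ℝ) :
    groundState Λ p t ^ r =
      ((p + 1) * Λ / 2) ^ (r / (p - 1)) * cosh (√Λ * (p - 1) / 2 * t) ^ (-(2 / (p - 1)) * r) := by
  have hA : 0 ≤ (p + 1) * Λ / 2 := by nlinarith
  rw [groundState, mul_rpow (rpow_nonneg hA _) (rpow_nonneg (cosh_pos _).le _), ← rpow_mul hA,
    ← rpow_mul (cosh_pos _).le, one_div_mul_eq_div, mul_div_right_comm _ t]

theorem deriv_deriv_groundState_rpow {Λ p : ℝ} (hΛ : 0 ≤ Λ) (hp : 1 < p) (t : ℝ) :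
    deriv (deriv fun s => groundState Λ p s ^ ((p + 1) / 2)) t =
      (Λ * (p + 1) ^ 2 / 4 - p * groundState Λ p t ^ (p - 1)) *
        groundState Λ p t ^ ((p + 1) / 2) := by
  have hp1 : p - 1 ≠ 0 := by linarith
  set b := √Λ * (p - 1) / 2
  set E := -(2 / (p - 1)) * ((p + 1) / 2)
  set X := cosh (b * t)
  simp_rw [groundState_rpow hΛ hp, deriv_const_mul_field', deriv_deriv_cosh_mul_rpow,
    div_self hp1, rpow_one]
  have hX : X ^ (-(2 / (p - 1)) * (p - 1)) * X ^ E = X ^ (E - 2) := by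
    rw [← rpow_add (cosh_pos _)]; congr 1; field_simp; ring
  have hb : b ^ 2 = Λ * (p - 1) ^ 2 / 4 := by rw [div_pow, mul_pow, sq_sqrt hΛ]; norm_num
  have hE : E * (p - 1) = -(p + 1) := by simp only [E]; field_simp
  have hbE : b ^ 2 * E ^ 2 = Λ * (p + 1) ^ 2 / 4 := by
    rw [hb]; linear_combination Λ / 4 * (E * (p - 1) - (p + 1)) * hE
  have hbE' : b ^ 2 * E * (E - 1) = p * ((p + 1) * Λ / 2) := by
    rw [hb]; linear_combination Λ / 4 * (E * (p - 1) - 2 * p) * hE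
  linear_combination ((p + 1) * Λ / 2) ^ ((p + 1) / 2 / (p - 1)) *
    (hbE * X ^ E - hbE' * X ^ (E - 2) + p * ((p + 1) * Λ / 2) * hX)

theorem stmt3_general (d : ℕ) (hd : 2 ≤ d) (Λ p : ℝ) (hp : 1 < p)
    (hFS : Λ = 4 * ((d : ℝ) - 1) / ((p + 1) ^ 2 - 4))
    (l : Fin d) (Θ : EuclideanSpace ℝ (Fin d) → ℝ) (hΘ : Θ = fun x => x l)
    (heig : ∀ θ ∈ Metric.sphere (0 : EuclideanSpace ℝ (Fin d)) 1,
      -sphereLaplacian Θ θ = ((d : ℝ) - 1) * Θ θ)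
    (Ψ : ℝ → ℝ)
    (hΨ : Ψ = fun t => ((p + 1) * Λ / 2) ^ (1 / (p - 1)) *
      Real.cosh (Real.sqrt Λ * (p - 1) * t / 2) ^ (-(2 / (p - 1))))
    (w : ℝ → EuclideanSpace ℝ (Fin d) → ℝ)
    (hw : w = fun t θ => Ψ t ^ ((p + 1) / 2) * Θ θ) :
    ∀ t : ℝ, ∀ θ ∈ Metric.sphere (0 : EuclideanSpace ℝ (Fin d)) 1,
      -sphereLaplacian (w t) θ - deriv (deriv fun s => w s θ) t + Λ * w t θ =
        p * Ψ t ^ (p - 1) * w t θ := by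
  intro t θ hθ
  obtain rfl : Ψ = groundState Λ p := hΨ
  subst hw hΘ
  have hgap : 0 < (p + 1) ^ 2 - 4 := by nlinarith
  have hΛpos : 0 < Λ := by
    have : (2 : ℝ) ≤ d := by exact_mod_cast hd
    rw [hFS]; exact div_pos (by linarith) hgap
  have hθ0 : θ ≠ 0 := by rintro rfl; simp at hθ
  have heigθ := heig θ hθ
  have hd' : (d : ℝ) - 1 = Λ * ((p + 1) ^ 2 - 4) / 4 := by rw [hFS]; field_simp
  beta_reduce at heigθ ⊢
  rw [sphereLaplacian_const_mul _ _ (contDiffAt_inv_norm_smul_apply l hθ0), deriv_mul_const_field',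
    deriv_mul_const_field, deriv_deriv_groundState_rpow hΛpos.le hp]
  linear_combination groundState Λ p t ^ ((p + 1) / 2) * (heigθ + θ l * hd')

/-- In the degenerate Felli–Schneider case, `w(t,θ) = Ψ(t)^{(p+1)/2} θ_l` solves the
linearized equation `-Δ_θ w - ∂_t² w + Λ w = p Ψ^{p-1} w` on the cylinder. -/
theorem stmt3 (d : ℕ) (hd : 2 ≤ d) (a Λ p : ℝ) (ha : a < 0) (hp : 1 < p)
    (hΛ : Λ = (((d : ℝ) - 2) / 2 - a) ^ 2)
    (hFS : Λ = 4 * ((d : ℝ) - 1) / ((p + 1) ^ 2 - 4))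
    (l : Fin d) (Θ : EuclideanSpace ℝ (Fin d) → ℝ) (hΘ : Θ = fun x => x l)
    (heig : ∀ θ ∈ Metric.sphere (0 : EuclideanSpace ℝ (Fin d)) 1,
      -sphereLaplacian Θ θ = ((d : ℝ) - 1) * Θ θ)
    (Ψ : ℝ → ℝ)
    (hΨ : Ψ = fun t => ((p + 1) * Λ / 2) ^ (1 / (p - 1)) *
      Real.cosh (Real.sqrt Λ * (p - 1) * t / 2) ^ (-(2 / (p - 1))))
    (w : ℝ → EuclideanSpace ℝ (Fin d) → ℝ)
    (hw : w = fun t θ => Ψ t ^ ((p + 1) / 2) * Θ θ) :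
    ∀ t : ℝ, ∀ θ ∈ Metric.sphere (0 : EuclideanSpace ℝ (Fin d)) 1,
      -sphereLaplacian (w t) θ - deriv (deriv fun s => w s θ) t + Λ * w t θ =
        p * Ψ t ^ (p - 1) * w t θ :=
  stmt3_general d hd Λ p hp hFS l Θ hΘ heig Ψ hΨ w hw
end

section
/- Let Λ > 0, p > 1, and Ψ(t) = ((p+1)Λ/2)^{1/(p-1)}(cosh(√Λ(p-1)t/2))^{-2/(p-1)}. For s ∈ ℝ write Ψ_s(t) = Ψ(t-s). Then the map F : ℝ → ℝ, F(s) = ∫_ℝ Ψ(t)^p ∂_tΨ_s(t) dt, satisfies F(0) = 0 and F'(0) = -∫_ℝ Ψ(t)^p Ψ''(t) dt ≠ 0; in particular s = 0 is a nondegenerate zero of F. -/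
/-!
Write `Ψ t = c * cosh (a * t) ^ (-q)` with `a = √Λ (p - 1) / 2` and `q = 2 / (p - 1)`. Then
`Ψ' = -q a tanh(a t) Ψ` and `Ψ'' = q a² ((q + 1) tanh²(a t) - 1) Ψ`, so `Ψ ^ p` is integrable while
`Ψ'` and `Ψ''` are bounded. As `Ψ` is even, `Ψ ^ p Ψ'` is odd and `F 0 = 0`; differentiating under
the integral sign gives `F' 0 = -∫ Ψ ^ p Ψ''`, and an integration by parts turns this into
`p ∫ Ψ ^ (p - 1) (Ψ')² > 0`.
-/

open Real MeasureTheory Filter Set Topology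

theorem integral_eq_zero_of_odd {f : ℝ → ℝ} (hf : ∀ t, f (-t) = -f t) : ∫ t, f t = 0 := by
  have h := integral_neg_eq_self f volume
  simp only [hf, integral_neg] at h
  linarith

theorem hasDerivAt_integral_mul_comp_sub {g h h' : ℝ → ℝ} {C M : ℝ} (hg : Integrable g)
    (hh : ∀ x, HasDerivAt h (h' x) x) (hh_bdd : ∀ x, |h x| ≤ C)
    (hh' : Continuous h') (hh'_bdd : ∀ x, |h' x| ≤ M) (s₀ : ℝ) :
    HasDerivAt (fun s => ∫ t, g t * h (t - s)) (-∫ t, g t * h' (t - s₀)) s₀ := by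
  have hh_cont : Continuous h := continuous_iff_continuousAt.2 fun x => (hh x).continuousAt
  have key := hasDerivAt_integral_of_dominated_loc_of_deriv_le (x₀ := s₀)
    (F := fun s t => g t * h (t - s)) (F' := fun s t => -(g t * h' (t - s)))
    (bound := fun t => |g t| * M) univ_mem
    (Eventually.of_forall fun s => hg.aestronglyMeasurable.mul
      (hh_cont.comp (continuous_sub_right s)).aestronglyMeasurable)
    (hg.mul_bdd (hh_cont.comp (continuous_sub_right s₀)).aestronglyMeasurable
      (ae_of_all _ fun t => hh_bdd _))
    (hg.aestronglyMeasurable.mul (hh'.comp (continuous_sub_right s₀)).aestronglyMeasurable).neg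
    (ae_of_all _ fun t s _ => by
      rw [norm_neg, norm_mul, Real.norm_eq_abs, Real.norm_eq_abs]
      exact mul_le_mul_of_nonneg_left (hh'_bdd _) (abs_nonneg _))
    (hg.abs.mul_const M)
    (ae_of_all _ fun t s _ =>
      (((hh (t - s)).comp s ((hasDerivAt_id s).const_sub t)).const_mul (g t)).congr_deriv
        (by ring))
  simpa only [integral_neg] using key.2

theorem integral_rpow_mul_deriv_deriv_lt_zero {u u' u'' : ℝ → ℝ} {p t₀ : ℝ} (hp : 0 < p)
    (hu : ∀ t, 0 < u t) (hu' : ∀ t, HasDerivAt u (u' t) t) (hu'' : ∀ t, HasDerivAt u' (u'' t) t)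
    (h_int : Integrable fun t => u t ^ p * u' t)
    (h_int' : Integrable fun t => u t ^ (p - 1) * u' t ^ 2)
    (h_int'' : Integrable fun t => u t ^ p * u'' t) (ht₀ : u' t₀ ≠ 0) :
    ∫ t, u t ^ p * u'' t < 0 := by
  have hu_cont : Continuous u := continuous_iff_continuousAt.2 fun t => (hu' t).continuousAt
  have hu'_cont : Continuous u' := continuous_iff_continuousAt.2 fun t => (hu'' t).continuousAt
  have h_sq : ∀ t, p * u t ^ (p - 1) * u' t * u' t = p * (u t ^ (p - 1) * u' t ^ 2) :=
    fun t => by ring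
  have h_ibp : ∫ t, u t ^ p * u'' t = -∫ t, p * u t ^ (p - 1) * u' t * u' t :=
    integral_mul_deriv_eq_deriv_mul_of_integrable
      (fun t _ => ((hu' t).rpow_const (Or.inl (hu t).ne')).congr_deriv (by ring))
      (fun t _ => hu'' t) h_int''
      ((h_int'.const_mul p).congr (ae_of_all _ fun t => by simp only [Pi.mul_apply]; ring)) h_int
  have h_pos : 0 < ∫ t, p * u t ^ (p - 1) * u' t * u' t := by
    simp only [h_sq]
    have h_cont : Continuous fun t => p * (u t ^ (p - 1) * u' t ^ 2) :=
      continuous_const.mul ((hu_cont.rpow_const fun t => Or.inl (hu t).ne').mul (hu'_cont.pow 2))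
    refine integral_pos_of_integrable_nonneg_nonzero (x := t₀) h_cont (h_int'.const_mul p)
      (fun t => mul_nonneg hp.le (mul_nonneg (rpow_nonneg (hu t).le _) (sq_nonneg _))) ?_
    exact mul_ne_zero hp.ne' (mul_ne_zero (rpow_pos_of_pos (hu t₀) _).ne' (pow_ne_zero 2 ht₀))
  linarith

theorem hasDerivAt_tanh (x : ℝ) : HasDerivAt tanh (1 - tanh x ^ 2) x := by
  rw [show tanh = fun y => sinh y / cosh y from funext tanh_eq_sinh_div_cosh]
  refine ((hasDerivAt_sinh x).div (hasDerivAt_cosh x) (cosh_pos x).ne').congr_deriv ?_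
  field_simp

theorem continuous_tanh : Continuous tanh :=
  continuous_iff_continuousAt.2 fun x => (hasDerivAt_tanh x).continuousAt

theorem cosh_rpow_neg_le {q : ℝ} (hq : 0 ≤ q) (x : ℝ) :
    cosh x ^ (-q) ≤ 2 ^ q * exp (-(q * |x|)) := by
  have h_exp : exp |x| / 2 ≤ cosh x := by
    rw [← cosh_abs, cosh_eq]
    linarith [exp_pos (-|x|)]
  calc cosh x ^ (-q) ≤ (exp |x| / 2) ^ (-q) :=
        rpow_le_rpow_of_nonpos (by positivity) h_exp (neg_nonpos.2 hq)
    _ = 2 ^ q * exp (-(q * |x|)) := by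
        rw [div_rpow (exp_pos _).le zero_le_two, ← exp_mul, rpow_neg zero_le_two, div_inv_eq_mul]
        ring_nf

noncomputable def sechPow (c a q t : ℝ) : ℝ := c * cosh (a * t) ^ (-q)

section sechPow

variable {c a q : ℝ}

theorem sechPow_neg (t : ℝ) : sechPow c a q (-t) = sechPow c a q t := by
  simp only [sechPow, mul_neg, cosh_neg]

theorem sechPow_pos (hc : 0 < c) (t : ℝ) : 0 < sechPow c a q t :=
  mul_pos hc (rpow_pos_of_pos (cosh_pos _) _)

theorem sechPow_le (hc : 0 ≤ c) (hq : 0 ≤ q) (t : ℝ) : sechPow c a q t ≤ c :=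
  mul_le_of_le_one_right hc (rpow_le_one_of_one_le_of_nonpos (one_le_cosh _) (neg_nonpos.2 hq))

theorem sechPow_rpow (hc : 0 ≤ c) (r t : ℝ) :
    sechPow c a q t ^ r = sechPow (c ^ r) a (q * r) t := by
  rw [sechPow, sechPow, mul_rpow hc (rpow_nonneg (cosh_pos _).le _), ← rpow_mul (cosh_pos _).le,
    neg_mul]

theorem continuous_sechPow : Continuous (sechPow c a q) :=
  continuous_const.mul ((continuous_cosh.comp (continuous_const_mul a)).rpow_const
    fun _ => Or.inl (cosh_pos _).ne')

theorem integrable_sechPow (hq : 0 < q) (ha : a ≠ 0) : Integrable (sechPow c a q) := by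
  have hb : 0 < q * |a| := mul_pos hq (abs_pos.2 ha)
  refine continuous_sechPow.locallyIntegrable.integrable_of_isBigO_atTop_of_norm_isNegInvariant
    (ae_of_all _ fun t => by simp only [Function.comp_apply, sechPow_neg])
    (g := fun t => exp (-(q * |a|) * t)) ?_ ⟨Ioi 0, Ioi_mem_atTop 0, exp_neg_integrableOn_Ioi 0 hb⟩
  refine Asymptotics.IsBigO.of_bound (|c| * 2 ^ q) (Eventually.of_forall fun t => ?_)
  rw [sechPow, norm_mul, Real.norm_eq_abs, Real.norm_eq_abs, Real.norm_eq_abs,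
    abs_of_pos (exp_pos _), abs_of_nonneg (rpow_nonneg (cosh_pos _).le _), mul_assoc]
  refine mul_le_mul_of_nonneg_left ((cosh_rpow_neg_le hq.le _).trans ?_) (abs_nonneg c)
  gcongr
  rw [abs_mul]
  nlinarith [le_abs_self t, abs_nonneg a]

theorem integrable_sechPow_rpow (hc : 0 ≤ c) (hq : 0 < q) (ha : a ≠ 0) {r : ℝ} (hr : 0 < r) :
    Integrable fun t => sechPow c a q t ^ r := by
  simpa only [sechPow_rpow hc] using integrable_sechPow (c := c ^ r) (mul_pos hq hr) ha

theorem hasDerivAt_sechPow (t : ℝ) :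
    HasDerivAt (sechPow c a q) (-(q * a) * tanh (a * t) * sechPow c a q t) t := by
  have h := (((hasDerivAt_cosh (a * t)).comp t ((hasDerivAt_id t).const_mul a)).rpow_const
    (p := -q) (Or.inl (cosh_pos _).ne')).const_mul c
  refine h.congr_deriv ?_
  have h_pow : cosh (a * t) ^ (-q - 1) = cosh (a * t) ^ (-q) / cosh (a * t) :=
    rpow_sub_one (cosh_pos _).ne' _
  simp only [Function.comp_apply]
  rw [h_pow, sechPow, tanh_eq_sinh_div_cosh]
  ring

theorem deriv_sechPow :
    deriv (sechPow c a q) = fun t => -(q * a) * tanh (a * t) * sechPow c a q t :=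
  funext fun t => (hasDerivAt_sechPow t).deriv

theorem hasDerivAt_deriv_sechPow (t : ℝ) :
    HasDerivAt (deriv (sechPow c a q))
      (q * a ^ 2 * ((q + 1) * tanh (a * t) ^ 2 - 1) * sechPow c a q t) t := by
  rw [deriv_sechPow]
  have h_tanh := (hasDerivAt_tanh (a * t)).comp t ((hasDerivAt_id t).const_mul a)
  refine ((h_tanh.const_mul (-(q * a))).mul (hasDerivAt_sechPow t)).congr_deriv ?_
  simp only [Function.comp_apply]
  ring

theorem deriv_deriv_sechPow :
    deriv (deriv (sechPow c a q)) =
      fun t => q * a ^ 2 * ((q + 1) * tanh (a * t) ^ 2 - 1) * sechPow c a q t :=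
  funext fun t => (hasDerivAt_deriv_sechPow t).deriv

theorem abs_deriv_sechPow_le (hc : 0 ≤ c) (t : ℝ) :
    |deriv (sechPow c a q) t| ≤ |q * a| * sechPow c a q t := by
  have hΨ : 0 ≤ sechPow c a q t := mul_nonneg hc (rpow_nonneg (cosh_pos _).le _)
  rw [deriv_sechPow, abs_mul, abs_mul, abs_neg, abs_of_nonneg hΨ]
  gcongr
  exact mul_le_of_le_one_right (abs_nonneg _) (abs_tanh_lt_one _).le

theorem abs_deriv_deriv_sechPow_le (hc : 0 ≤ c) (hq : 0 ≤ q) (t : ℝ) :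
    |deriv (deriv (sechPow c a q)) t| ≤ q * (q + 1) * a ^ 2 * sechPow c a q t := by
  have hΨ : 0 ≤ sechPow c a q t := mul_nonneg hc (rpow_nonneg (cosh_pos _).le _)
  have h_tanh := tanh_sq_lt_one (a * t)
  have h_factor : |(q + 1) * tanh (a * t) ^ 2 - 1| ≤ q + 1 := by
    rw [abs_le]
    constructor <;> nlinarith [sq_nonneg (tanh (a * t))]
  rw [deriv_deriv_sechPow, abs_mul, abs_mul, abs_of_nonneg hΨ,
    abs_of_nonneg (mul_nonneg hq (sq_nonneg a))]
  calc q * a ^ 2 * |(q + 1) * tanh (a * t) ^ 2 - 1| * sechPow c a q t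
      ≤ q * a ^ 2 * (q + 1) * sechPow c a q t := by gcongr
    _ = q * (q + 1) * a ^ 2 * sechPow c a q t := by ring

theorem continuous_deriv_deriv_sechPow : Continuous (deriv (deriv (sechPow c a q))) := by
  rw [deriv_deriv_sechPow]
  have h_tanh_sq : Continuous fun t => tanh (a * t) ^ 2 :=
    (continuous_tanh.comp (continuous_const_mul a)).pow 2
  exact (continuous_const.mul ((continuous_const.mul h_tanh_sq).sub continuous_const)).mul
    continuous_sechPow

theorem integrable_sechPow_rpow_mul_deriv_sq (hc : 0 < c) (hq : 0 < q) (ha : a ≠ 0) {r : ℝ}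
    (hr : 0 < r + 2) :
    Integrable fun t => sechPow c a q t ^ r * deriv (sechPow c a q) t ^ 2 := by
  refine (integrable_sechPow_rpow hc.le hq ha hr).mul_bdd (c := (q * a) ^ 2)
    (g := fun t => (q * a * tanh (a * t)) ^ 2) ?_ ?_ |>.congr (ae_of_all _ fun t => ?_)
  · exact ((continuous_tanh.comp (continuous_const_mul a)).const_mul (q * a)).pow 2
      |>.aestronglyMeasurable
  · refine ae_of_all _ fun t => ?_
    rw [Real.norm_eq_abs, abs_of_nonneg (sq_nonneg _), mul_pow]
    exact mul_le_of_le_one_right (sq_nonneg _) (tanh_sq_lt_one _).le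
  · have hΨ := sechPow_pos (a := a) (q := q) hc t
    simp only [deriv_sechPow]
    rw [rpow_add hΨ, rpow_two]
    ring

end sechPow

/-- `s = 0` is a nondegenerate zero of `F(s) = ∫ Ψ(t)^p ∂_tΨ(t-s) dt`:
`F(0) = 0` and `F'(0) = -∫ Ψ^p Ψ'' ≠ 0`. -/
theorem stmt14 (Λ p : ℝ) (hΛ : 0 < Λ) (hp : 1 < p)
    (Ψ : ℝ → ℝ)
    (hΨ : Ψ = fun t => ((p + 1) * Λ / 2) ^ (1 / (p - 1)) *
      Real.cosh (Real.sqrt Λ * (p - 1) * t / 2) ^ (-(2 / (p - 1))))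
    (F : ℝ → ℝ) (hF : F = fun s => ∫ t : ℝ, Ψ t ^ p * deriv Ψ (t - s)) :
    F 0 = 0 ∧
    HasDerivAt F (-∫ t : ℝ, Ψ t ^ p * deriv (deriv Ψ) t) 0 ∧
    (-∫ t : ℝ, Ψ t ^ p * deriv (deriv Ψ) t) ≠ 0 := by
  set c := ((p + 1) * Λ / 2) ^ (1 / (p - 1))
  set a := √Λ * (p - 1) / 2
  set q := 2 / (p - 1)
  have hp₀ : 0 < p := zero_lt_one.trans hp
  have hc : 0 < c := rpow_pos_of_pos (by positivity) _
  have ha : 0 < a := by positivity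
  have hq : 0 < q := by positivity
  obtain rfl : Ψ = sechPow c a q := by
    rw [hΨ]
    ext t
    rw [sechPow, mul_div_right_comm]
  subst hF
  have hg := integrable_sechPow_rpow hc.le hq ha.ne' hp₀
  have hΨ' (t : ℝ) : HasDerivAt (sechPow c a q) (deriv (sechPow c a q) t) t :=
    (hasDerivAt_sechPow t).differentiableAt.hasDerivAt
  have hΨ'' (t : ℝ) :
      HasDerivAt (deriv (sechPow c a q)) (deriv (deriv (sechPow c a q)) t) t :=
    (hasDerivAt_deriv_sechPow t).differentiableAt.hasDerivAt
  have hΨ'_le (t : ℝ) : |deriv (sechPow c a q) t| ≤ |q * a| * c :=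
    (abs_deriv_sechPow_le hc.le t).trans (by gcongr; exact sechPow_le hc.le hq.le t)
  have hΨ''_le (t : ℝ) : |deriv (deriv (sechPow c a q)) t| ≤ q * (q + 1) * a ^ 2 * c :=
    (abs_deriv_deriv_sechPow_le hc.le hq.le t).trans (by gcongr; exact sechPow_le hc.le hq.le t)
  refine ⟨?_, ?_, ?_⟩
  · refine integral_eq_zero_of_odd fun t => ?_
    simp only [sub_zero, sechPow_neg, deriv_sechPow, mul_neg, tanh_neg]
    ring
  · simpa only [sub_zero] using hasDerivAt_integral_mul_comp_sub hg hΨ'' hΨ'_le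
      continuous_deriv_deriv_sechPow hΨ''_le 0
  · have h_cont : Continuous (deriv (sechPow c a q)) :=
      continuous_iff_continuousAt.2 fun t => (hΨ'' t).continuousAt
    have h_ne : deriv (sechPow c a q) 1 ≠ 0 := by
      rw [deriv_sechPow]
      refine mul_ne_zero (mul_ne_zero (neg_ne_zero.2 (mul_pos hq ha).ne') ?_) (sechPow_pos hc 1).ne'
      rw [mul_one, ← Real.tanh_zero]
      exact tanh_injective.ne ha.ne'
    refine neg_ne_zero.2 (integral_rpow_mul_deriv_deriv_lt_zero hp₀ (sechPow_pos hc) hΨ' hΨ''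
      ?_ ?_ ?_ h_ne).ne
    · exact hg.mul_bdd h_cont.aestronglyMeasurable (ae_of_all _ hΨ'_le)
    · exact integrable_sechPow_rpow_mul_deriv_sq hc hq ha.ne' (by linarith)
    · exact hg.mul_bdd continuous_deriv_deriv_sechPow.aestronglyMeasurable (ae_of_all _ hΨ''_le)
end
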